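/- Let F(m,n) = ((m+n-1)^2 - (m+n-1) % 2)/4 + min(m,n). The restriction of F to pairs of positive integers (m,n) with m ≥ n is a bijection onto the positive integers. -/
import Mathlib


def F (m n : ℕ) : ℕ := ((m + n - 1)^2 - (m + n - 1) % 2) / 4 + min m n

def g (s : ℕ) : ℕ := (s^2 - s % 2) / 4

lemma g_even (k : ℕ) : g (2*k) = k^2 := by
  unfold g
  have h0 : (2*k) % 2 = 0 := by omega
  have h1 : (2*k)^2 = 4*k^2 := by ring
  rw [h0, h1, Nat.sub_zero, Nat.mul_div_cancel_left _ (by norm_num)]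

lemma g_odd (k : ℕ) : g (2*k+1) = k^2 + k := by
  unfold g
  have h0 : (2*k+1) % 2 = 1 := by omega
  have h1 : (2*k+1)^2 - 1 = 4*(k^2+k) := by
    have : (2*k+1)^2 = 4*(k^2+k) + 1 := by ring
    omega
  rw [h0, h1, Nat.mul_div_cancel_left _ (by norm_num)]

lemma g_succ (s : ℕ) : g s ≤ g (s+1) := by
  rcases Nat.even_or_odd s with ⟨k, hk⟩ | ⟨k, hk⟩
  · have h : s = 2*k := by omega
    subst h
    rw [g_even, g_odd]
    omega
  · subst hk
    have h : 2*k+1+1 = 2*(k+1) := by ring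
    rw [h, g_odd, g_even]
    nlinarith
lemma g_mono : Monotone g := monotone_nat_of_le_succ g_succ

lemma F_eq {m n : ℕ} (h : n ≤ m) : F m n = g (m + n - 1) + n := by
  unfold F g
  rw [min_eq_right h]

lemma F_upper {m n : ℕ} (h1 : 1 ≤ n) (hmn : n ≤ m) : F m n ≤ g (m + n) := by
  rw [F_eq hmn]
  rcases Nat.even_or_odd (m + n) with ⟨k, hk⟩ | ⟨k, hk⟩
  · have hk' : m + n = 2 * k := by omega
    have hk1 : 1 ≤ k := by omega
    obtain ⟨j, rfl⟩ : ∃ j, k = j + 1 := ⟨k - 1, by omega⟩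
    have e1 : m + n - 1 = 2 * j + 1 := by omega
    rw [e1, hk', g_odd, g_even]
    have hn : n ≤ j + 1 := by omega
    nlinarith
  · have e1 : m + n - 1 = 2 * k := by omega
    rw [e1, hk, g_even, g_odd]
    have hn : n ≤ k := by omega
    exact Nat.add_le_add_left hn _

lemma g_step {m n : ℕ} (h1 : 1 ≤ n) (hmn : n ≤ m) (h2 : m ≤ n + 1) :
    g (m + n) = g (m + n - 1) + n := by
  rcases Nat.eq_or_lt_of_le hmn with heq | hlt
  · subst heq
    obtain ⟨j, rfl⟩ : ∃ j, n = j + 1 := ⟨n - 1, by omega⟩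
    have e2 : (j+1) + (j+1) - 1 = 2 * j + 1 := by omega
    have e1 : (j+1) + (j+1) = 2 * (j+1) := by ring
    rw [e2, e1, g_even, g_odd]
    ring
  · have hm : m = n + 1 := by omega
    subst hm
    have e2 : (n+1) + n - 1 = 2 * n := by omega
    have e1 : (n+1) + n = 2 * n + 1 := by ring
    rw [e2, e1, g_odd, g_even]

theorem F_bijOn :
    Set.BijOn (fun p : ℕ × ℕ => F p.1 p.2) {p | 1 ≤ p.2 ∧ p.2 ≤ p.1} {c | 1 ≤ c} := by
  refine ⟨?_, ?_, ?_⟩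
  · -- MapsTo
    rintro ⟨m, n⟩ ⟨h1, h2⟩
    simp only at h1 h2
    simp only [Set.mem_setOf_eq]
    rw [F_eq h2]
    omega
  · -- InjOn
    rintro ⟨m, n⟩ ⟨h1, h2⟩ ⟨m', n'⟩ ⟨h1', h2'⟩ heq
    simp only at h1 h2 h1' h2' heq
    have hu := F_upper h1 h2
    have hu' := F_upper h1' h2'
    have hF : F m n = g (m + n - 1) + n := F_eq h2
    have hF' : F m' n' = g (m' + n' - 1) + n' := F_eq h2'
    have hs : m + n = m' + n' := by
      rcases lt_trichotomy (m + n) (m' + n') with h | h | h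
      · have := g_mono (show m + n ≤ m' + n' - 1 by omega)
        omega
      · exact h
      · have := g_mono (show m' + n' ≤ m + n - 1 by omega)
        omega
    rw [hF, hF', hs] at heq
    have hn : n = n' := by omega
    have hm : m = m' := by omega
    simp [hm, hn]
  · -- SurjOn
    intro c hc
    simp only [Set.mem_setOf_eq] at hc
    induction c, hc using Nat.le_induction with
    | base =>
        refine ⟨(1, 1), by constructor <;> norm_num, ?_⟩
        simp [F]
    | succ c hc ih =>
        obtain ⟨⟨m, n⟩, ⟨h1, h2⟩, hF⟩ := ih
        simp only at h1 h2 hF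
        by_cases h : n + 2 ≤ m
        · refine ⟨(m - 1, n + 1), ⟨by omega, by omega⟩, ?_⟩
          simp only
          rw [F_eq (show n + 1 ≤ m - 1 by omega)]
          rw [F_eq h2] at hF
          have e : m - 1 + (n + 1) - 1 = m + n - 1 := by omega
          rw [e]
          omega
        · refine ⟨(m + n, 1), ⟨le_refl 1, by omega⟩, ?_⟩
          simp only
          rw [F_eq (show 1 ≤ m + n by omega)]
          rw [F_eq h2] at hF
          have e : m + n + 1 - 1 = m + n := by omega
          rw [e, g_step h1 h2 (by omega)]
          omega
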